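/- Let 0 < q < 1, 0 < p < 1, 0 ≤ ε₀, ε₁ with q(1−ε₀)+(1−q)ε₁ = p, and let N be such that qN, ε₀qN, (1−q)N, ε₁(1−q)N, pN are positive integers. Then the covering probability p_c = C(qN, ε₀qN)·C((1−q)N, ε₁(1−q)N) / C(N, pN) satisfies p_c ≥ N^{−1/2}·2^{−K₂}·2^{−i(ε₀,ε₁)N}, where i(ε₀,ε₁) = H₂(p) − q·H₂(ε₀) − (1−q)·H₂(ε₁) (in bits) and K₂ = log₂(√(2π)·e^{5/12}) − (1/2)·log₂(p(1−p)). -/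

import Mathlib

/-!
Robbins' form of Stirling's formula, `√(2πn) (n/e)^n ≤ n! ≤ √(2πn) (n/e)^n e^{1/(12n)}`, pins down
each binomial coefficient: for `j + d = n` with `j, d ≠ 0`, `C(n, j)` is
`√(n / (2π j d)) · 2^{n H₂(j/n)}` up to a factor between `e^{-1/6}` and `e^{1/12}`.
Since `4 j d ≤ n²`, the numerator coefficients are at least `√(2/(πn)) e^{-1/6} 2^{n H₂}`
(trivially also when `C(n, j) = 1`), while `C(N, pN) ≤ e^{1/12} 2^{N H₂(p)} / √(2πN p(1-p))`.
The entropy terms combine to `2^{-i(ε₀,ε₁) N}`, and the remaining prefactor dominates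
`N^{-1/2} 2^{-K₂}` because `k m ≤ N²`.
-/

/-- Binary entropy function (in bits). -/
noncomputable def H2 (x : ℝ) : ℝ :=
  -(x * Real.logb 2 x) - ((1 - x) * Real.logb 2 (1 - x))

open Real Filter Topology Nat

theorem mul_logb_div (b x : ℝ) {y : ℝ} (hy : y ≠ 0) :
    x * logb b (x / y) = x * logb b x - x * logb b y := by
  rcases eq_or_ne x 0 with rfl | hx
  · simp
  · rw [logb_div hx hy, mul_sub]

theorem rpow_neg_logb_sub_half_mul_logb {b x y : ℝ} (hb : 0 < b) (hb1 : b ≠ 1) (hx : 0 < x)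
    (hy : 0 < y) : b ^ (-(logb b x - 1 / 2 * logb b y)) = √y / x := by
  rw [neg_sub, rpow_sub hb, mul_comm (1 / 2 : ℝ), rpow_mul hb.le, rpow_logb hb hb1 hy,
    rpow_logb hb hb1 hx, sqrt_eq_rpow]

-- Also valid when `j = 0` or `d = 0`, through `0 ^ 0 = 1` and `logb 2 0 = 0`.
theorem two_rpow_mul_H2 {j d n : ℕ} (h : j + d = n) (hn : n ≠ 0) :
    (2 : ℝ) ^ ((n : ℝ) * H2 (j / n)) = n ^ n / (j ^ j * d ^ d) := by
  have hn' : (n : ℝ) ≠ 0 := by exact_mod_cast hn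
  have hjd : (j : ℝ) + d = n := by exact_mod_cast h
  have hsub : 1 - (j : ℝ) / n = d / n := by field_simp; linarith
  have hpos (i : ℕ) : (0 : ℝ) < (i : ℝ) ^ i := by exact_mod_cast Nat.pow_self_pos
  have hlog : (n : ℝ) * H2 (j / n) = logb 2 (n ^ n / (j ^ j * d ^ d)) := calc
    (n : ℝ) * H2 (j / n) = -(j * logb 2 (j / n)) - d * logb 2 (d / n) := by
      rw [H2, hsub]; field_simp
    _ = n * logb 2 n - (j * logb 2 j + d * logb 2 d) := by
      rw [mul_logb_div _ _ hn', mul_logb_div _ _ hn', ← hjd]; ring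
    _ = logb 2 (n ^ n / (j ^ j * d ^ d)) := by
      rw [logb_div (hpos n).ne' (mul_pos (hpos j) (hpos d)).ne',
        logb_mul (hpos j).ne' (hpos d).ne', logb_pow, logb_pow, logb_pow]
  have := hpos j; have := hpos d; have := hpos n
  rw [hlog, rpow_logb (by norm_num) (by norm_num) (by positivity)]

namespace Stirling

noncomputable def stirlingApprox (n : ℕ) : ℝ := √(2 * π * n) * (n / exp 1) ^ n

theorem stirlingApprox_pos {n : ℕ} (hn : n ≠ 0) : 0 < stirlingApprox n := by
  unfold stirlingApprox; positivity

theorem stirlingApprox_le_factorial (n : ℕ) : stirlingApprox n ≤ n ! :=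
  le_factorial_stirling n

theorem stirlingSeq_le_sqrt_pi_mul_exp {n : ℕ} (hn : n ≠ 0) :
    stirlingSeq n ≤ √π * exp (1 / (12 * n)) := by
  obtain ⟨n, rfl⟩ := exists_eq_succ_of_ne_zero hn
  -- Robbins' stepwise bound makes `log (stirlingSeq n) - 1 / (12 n)` increase to `log √π`.
  set f : ℕ → ℝ := fun n ↦ log (stirlingSeq (n + 1)) - 12⁻¹ * (1 / ((n : ℝ) + 1))
  have hmono : Monotone f := monotone_nat_of_le_succ fun n ↦ by
    have := log_stirlingSeq_sdiff_le (n + 1)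
    have hstep : 12⁻¹ * (1 / ((n : ℝ) + 1)) - 12⁻¹ * (1 / ((n : ℝ) + 1 + 1)) =
        1 / (12 * ((n : ℝ) + 1) * ((n : ℝ) + 1 + 1)) := by
      field_simp; ring
    simp only [f]
    push_cast at this ⊢
    linarith
  have hlim : Tendsto f atTop (𝓝 (log √π - 12⁻¹ * 0)) :=
    ((tendsto_stirlingSeq_sqrt_pi.comp (tendsto_add_atTop_nat 1)).log (by positivity)).sub
      (tendsto_one_div_add_atTop_nhds_zero_nat.const_mul _)
  have hf := hmono.ge_of_tendsto hlim n
  simp only [f, mul_zero, sub_zero] at hf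
  calc stirlingSeq (n + 1) = exp (log (stirlingSeq (n + 1))) := (exp_log (stirlingSeq'_pos n)).symm
    _ ≤ exp (log √π + 1 / (12 * (n + 1 : ℕ))) := by
      gcongr
      push_cast
      field_simp at hf ⊢
      linarith
    _ = √π * exp (1 / (12 * (n + 1 : ℕ))) := by rw [exp_add, exp_log (by positivity)]

theorem factorial_le_stirlingApprox_mul_exp {n : ℕ} (hn : n ≠ 0) :
    n ! ≤ stirlingApprox n * exp (1 / (12 * n)) := by
  have : stirlingApprox n * exp (1 / (12 * n)) =
      √π * exp (1 / (12 * n)) * (√(2 * n) * (n / exp 1) ^ n) := by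
    simp only [stirlingApprox, cast_nonneg, sqrt_mul', ofNat_nonneg, sqrt_mul]; ring
  rw [this, ← div_le_iff₀ (by positivity)]
  exact stirlingSeq_le_sqrt_pi_mul_exp hn

theorem stirlingApprox_div_mul {j d n : ℕ} (h : j + d = n) (hj : j ≠ 0) (hd : d ≠ 0) :
    stirlingApprox n / (stirlingApprox j * stirlingApprox d) =
      √(n / (2 * π * j * d)) * 2 ^ ((n : ℝ) * H2 (j / n)) := by
  rw [two_rpow_mul_H2 h (by omega)]
  subst h
  have hsqrt : √(((j + d : ℕ) : ℝ) / (2 * π * j * d)) =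
      √(2 * π * (j + d : ℕ)) / (√(2 * π * j) * √(2 * π * d)) := by
    rw [← sqrt_mul (by positivity), ← sqrt_div' _ (by positivity)]
    congr 1
    field_simp
  rw [hsqrt]
  simp only [stirlingApprox, div_pow, pow_add (exp 1)]
  push_cast
  field_simp

end Stirling

open Stirling

theorem choose_le_two_rpow_H2 {j d n : ℕ} (h : j + d = n) (hj : j ≠ 0) (hd : d ≠ 0) :
    (n.choose j : ℝ) ≤
      √(n / (2 * π * j * d)) * exp (1 / 12) * 2 ^ ((n : ℝ) * H2 (j / n)) := by
  have hn : n ≠ 0 := by omega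
  have := stirlingApprox_pos hj
  have := stirlingApprox_pos hd
  have := stirlingApprox_pos hn
  calc (n.choose j : ℝ) = n ! / (j ! * d !) := by rw [← h, cast_add_choose]
    _ ≤ stirlingApprox n * exp (1 / (12 * n)) / (stirlingApprox j * stirlingApprox d) := by
      gcongr
      · exact factorial_le_stirlingApprox_mul_exp hn
      · exact stirlingApprox_le_factorial j
      · exact stirlingApprox_le_factorial d
    _ = √(n / (2 * π * j * d)) * 2 ^ ((n : ℝ) * H2 (j / n)) * exp (1 / (12 * n)) := by
      rw [mul_div_right_comm, stirlingApprox_div_mul h hj hd]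
    _ ≤ √(n / (2 * π * j * d)) * exp (1 / 12) * 2 ^ ((n : ℝ) * H2 (j / n)) := by
      rw [mul_right_comm]
      gcongr
      have : (1 : ℝ) ≤ n := by exact_mod_cast one_le_iff_ne_zero.mpr hn
      linarith

theorem two_rpow_H2_le_choose_of_ne_zero {j d n : ℕ} (h : j + d = n) (hj : j ≠ 0)
    (hd : d ≠ 0) :
    √(n / (2 * π * j * d)) * exp (-(1 / 6)) * 2 ^ ((n : ℝ) * H2 (j / n)) ≤
      (n.choose j : ℝ) := by
  have hfact {i : ℕ} (hi : i ≠ 0) : (i ! : ℝ) ≤ stirlingApprox i * exp (1 / 12) := by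
    have : (1 : ℝ) ≤ i := by exact_mod_cast one_le_iff_ne_zero.mpr hi
    have := stirlingApprox_pos hi
    refine (factorial_le_stirlingApprox_mul_exp hi).trans ?_
    gcongr
    linarith
  have := stirlingApprox_pos hj
  have := stirlingApprox_pos hd
  have hexp : exp (-(1 / 6)) = (exp (1 / 12) * exp (1 / 12))⁻¹ := by
    rw [← exp_add, ← exp_neg]; norm_num
  calc
    _ = stirlingApprox n / (stirlingApprox j * stirlingApprox d) * exp (-(1 / 6)) := by
      rw [stirlingApprox_div_mul h hj hd]; ring
    _ = stirlingApprox n /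
          (stirlingApprox j * exp (1 / 12) * (stirlingApprox d * exp (1 / 12))) := by
      rw [hexp]; ring
    _ ≤ n ! / (j ! * d !) := by
      gcongr
      · exact stirlingApprox_le_factorial n
      · exact hfact hj
      · exact hfact hd
    _ = n.choose j := by rw [← h, cast_add_choose]

theorem two_rpow_H2_le_choose {j d n : ℕ} (h : j + d = n) (hn : n ≠ 0) :
    √(2 / (π * n)) * exp (-(1 / 6)) * 2 ^ ((n : ℝ) * H2 (j / n)) ≤ (n.choose j : ℝ) := by
  have hn' : (1 : ℝ) ≤ n := by exact_mod_cast one_le_iff_ne_zero.mpr hn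
  have hconst : √(2 / (π * n)) * exp (-(1 / 6)) ≤ 1 := by
    refine mul_le_one₀ (sqrt_le_one.mpr ?_) (exp_pos _).le (exp_le_one_iff.mpr (by norm_num))
    rw [div_le_one (by positivity)]
    nlinarith [pi_gt_three]
  rcases eq_or_ne j 0 with rfl | hj
  · simpa [H2] using hconst
  rcases eq_or_ne d 0 with rfl | hd
  · obtain rfl : j = n := h
    simpa [H2, div_self (show (j : ℝ) ≠ 0 by positivity)] using hconst
  refine le_trans ?_ (two_rpow_H2_le_choose_of_ne_zero h hj hd)
  have : (0 : ℝ) < j := by positivity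
  have : (0 : ℝ) < d := by positivity
  have hjd : (j : ℝ) + d = n := by exact_mod_cast h
  gcongr ?_ * _ * _
  apply Real.sqrt_le_sqrt
  rw [div_le_div_iff₀ (by positivity) (by positivity), ← hjd]
  nlinarith [mul_nonneg pi_pos.le (sq_nonneg ((j : ℝ) - d))]

theorem stirling_prefactor_le {k m N p : ℝ} (hk : 0 < k) (hm : 0 < m) (hkN : k ≤ N)
    (hmN : m ≤ N) (hp : 0 < p) (hp1 : p < 1) :
    (√N)⁻¹ * (√(p * (1 - p)) / (√(2 * π) * exp (5 / 12))) ≤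
      √(2 / (π * k)) * exp (-(1 / 6)) * (√(2 / (π * m)) * exp (-(1 / 6))) /
        (√(N / (2 * π * (p * N) * ((1 - p) * N))) * exp (1 / 12)) := by
  have hN : 0 < N := hk.trans_le hkN
  have hp1' : 0 < 1 - p := by linarith
  have hexp : exp (5 / 12) = exp (1 / 12) * exp (1 / 6) * exp (1 / 6) := by
    rw [← exp_add, ← exp_add]; norm_num
  rw [exp_neg, hexp, ← pow_le_pow_iff_left₀ (by positivity) (by positivity) two_ne_zero]
  simp (disch := positivity) only [mul_pow, div_pow, inv_pow, Real.sq_sqrt]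
  field_simp
  have hkm : k * m ≤ N ^ 2 := by nlinarith
  nlinarith [pi_gt_three, exp_pos (1 / 12 : ℝ), exp_pos (1 / 6 : ℝ), mul_pos hp hp1']

theorem choose_mul_choose_div_choose_ge {N k m a b r : ℕ} {p : ℝ} (hk0 : k ≠ 0)
    (hm0 : m ≠ 0) (hak : a ≤ k) (hbm : b ≤ m) (hkN : k ≤ N) (hmN : m ≤ N) (hr0 : r ≠ 0)
    (hrN : r < N) (hr : (r : ℝ) = p * N) :
    (√N)⁻¹ * (√(p * (1 - p)) / (√(2 * π) * exp (5 / 12))) *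
        (2 ^ ((k : ℝ) * H2 (a / k)) * 2 ^ ((m : ℝ) * H2 (b / m)) / 2 ^ ((N : ℝ) * H2 p)) ≤
      (k.choose a * m.choose b : ℝ) / N.choose r := by
  have hN : (0 : ℝ) < N := by exact_mod_cast (show 0 < N by omega)
  have hp : 0 < p := by
    have : (0 : ℝ) < r := by positivity
    nlinarith
  have hp1 : p < 1 := by
    have : (r : ℝ) < N := by exact_mod_cast hrN
    nlinarith
  have hA := two_rpow_H2_le_choose (Nat.add_sub_cancel' hak) hk0
  have hB := two_rpow_H2_le_choose (Nat.add_sub_cancel' hbm) hm0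
  have hC := choose_le_two_rpow_H2 (Nat.add_sub_cancel' hrN.le) hr0 (by omega)
  rw [Nat.cast_sub hrN.le, hr, show (N : ℝ) - p * N = (1 - p) * N by ring,
    show p * N / N = p by field_simp] at hC
  have : (0 : ℝ) < N.choose r := by exact_mod_cast Nat.choose_pos hrN.le
  calc
    _ ≤ √(2 / (π * k)) * exp (-(1 / 6)) * (√(2 / (π * m)) * exp (-(1 / 6))) /
          (√(N / (2 * π * (p * N) * ((1 - p) * N))) * exp (1 / 12)) *
          (2 ^ ((k : ℝ) * H2 (a / k)) * 2 ^ ((m : ℝ) * H2 (b / m)) /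
            2 ^ ((N : ℝ) * H2 p)) := by
      gcongr
      exact stirling_prefactor_le (by positivity) (by positivity) (by exact_mod_cast hkN)
        (by exact_mod_cast hmN) hp hp1
    _ = √(2 / (π * k)) * exp (-(1 / 6)) * 2 ^ ((k : ℝ) * H2 (a / k)) *
          (√(2 / (π * m)) * exp (-(1 / 6)) * 2 ^ ((m : ℝ) * H2 (b / m))) /
          (√(N / (2 * π * (p * N) * ((1 - p) * N))) * exp (1 / 12) *
            2 ^ ((N : ℝ) * H2 p)) := by
      ring
    _ ≤ _ := by gcongr

theorem stmt_8_general (N k m a b r : ℕ) (q p e0 e1 : ℝ)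
    (hq : 0 < q) (hq1 : q < 1) (hp : 0 < p) (hp1 : p < 1)
    (he0' : e0 ≤ 1) (he1' : e1 ≤ 1)
    (hN : 0 < N)
    (hk : (k : ℝ) = q * N) (ha : (a : ℝ) = e0 * q * N)
    (hm : (m : ℝ) = (1 - q) * N) (hb : (b : ℝ) = e1 * (1 - q) * N)
    (hr : (r : ℝ) = p * N) :
    ((k.choose a * m.choose b : ℝ) / (N.choose r : ℝ)) ≥
      (N : ℝ) ^ (-(1/2) : ℝ) *
      (2 : ℝ) ^ (-(Real.logb 2 (Real.sqrt (2 * Real.pi) * Real.exp (5/12))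
          - (1/2) * Real.logb 2 (p * (1 - p)))) *
      (2 : ℝ) ^ (-(H2 p - q * H2 e0 - (1 - q) * H2 e1) * N) := by
  have hN' : (0 : ℝ) < N := by exact_mod_cast hN
  have hq1' : 0 < 1 - q := by linarith
  have hk0 : k ≠ 0 := by rw [← Nat.cast_ne_zero (R := ℝ), hk]; positivity
  have hm0 : m ≠ 0 := by rw [← Nat.cast_ne_zero (R := ℝ), hm]; positivity
  have hr0 : r ≠ 0 := by rw [← Nat.cast_ne_zero (R := ℝ), hr]; positivity
  have hak : a ≤ k := by exact_mod_cast (show (a : ℝ) ≤ k by rw [ha, hk]; nlinarith)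
  have hbm : b ≤ m := by exact_mod_cast (show (b : ℝ) ≤ m by rw [hb, hm]; nlinarith)
  have hkN : k ≤ N := by exact_mod_cast (show (k : ℝ) ≤ N by rw [hk]; nlinarith)
  have hmN : m ≤ N := by exact_mod_cast (show (m : ℝ) ≤ N by rw [hm]; nlinarith)
  have hrN : r < N := by exact_mod_cast (show (r : ℝ) < N by rw [hr]; nlinarith)
  have he0 : (a : ℝ) / k = e0 := by rw [ha, hk]; field_simp
  have he1 : (b : ℝ) / m = e1 := by rw [hb, hm]; field_simp
  rw [ge_iff_le, rpow_neg hN'.le, ← sqrt_eq_rpow,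
    rpow_neg_logb_sub_half_mul_logb two_pos (by norm_num) (by positivity) (by nlinarith),
    show -(H2 p - q * H2 e0 - (1 - q) * H2 e1) * N = k * H2 e0 + m * H2 e1 - N * H2 p by
      rw [hk, hm]; ring,
    rpow_sub two_pos, rpow_add two_pos, ← he0, ← he1]
  exact choose_mul_choose_div_choose_ge hk0 hm0 hak hbm hkN hmN hr0 hrN hr

/-- lower bound on the covering probability
`p_c = C(qN, ε₀qN) C((1−q)N, ε₁(1−q)N) / C(N, pN)
     ≥ N^{−1/2} 2^{−K₂} 2^{−i(ε₀,ε₁)N}`,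
where `i(ε₀,ε₁) = H₂(p) − q H₂(ε₀) − (1−q) H₂(ε₁)` and
`K₂ = log₂(√(2π) e^{5/12}) − (1/2) log₂(p(1−p))`. -/
theorem stmt_8 (N k m a b r : ℕ) (q p e0 e1 : ℝ)
    (hq : 0 < q) (hq1 : q < 1) (hp : 0 < p) (hp1 : p < 1)
    (he0 : 0 ≤ e0) (he0' : e0 ≤ 1) (he1 : 0 ≤ e1) (he1' : e1 ≤ 1)
    (hcons : q * (1 - e0) + (1 - q) * e1 = p) (hN : 0 < N)
    (hk : (k : ℝ) = q * N) (ha : (a : ℝ) = e0 * q * N)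
    (hm : (m : ℝ) = (1 - q) * N) (hb : (b : ℝ) = e1 * (1 - q) * N)
    (hr : (r : ℝ) = p * N) :
    ((k.choose a * m.choose b : ℝ) / (N.choose r : ℝ)) ≥
      (N : ℝ) ^ (-(1/2) : ℝ) *
      (2 : ℝ) ^ (-(Real.logb 2 (Real.sqrt (2 * Real.pi) * Real.exp (5/12))
          - (1/2) * Real.logb 2 (p * (1 - p)))) *
      (2 : ℝ) ^ (-(H2 p - q * H2 e0 - (1 - q) * H2 e1) * N) :=
  stmt_8_general N k m a b r q p e0 e1 hq hq1 hp hp1 he0' he1' hN hk ha hm hb hr
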